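/- Given δ > 0, there exists ε_0 > 0 such that for all 0 < ε < ε_0 the function F(A) = S_1(A^{−1}) − ε S_n(A^{−1}) satisfies: for every diagonal matrix A with all eigenvalues λ_i > δ, one has F(A) > 0 and ∂_{ii}F(A) = (−S_{n−1;i}(A) + ε)/(λ_i S_n(A)) < 0 for every i. -/

import Mathlib

/-!
On a diagonal matrix `F = (S_{n-1} - ε) / S_n`. Expanding in the `i`-th eigenvalue gives
`S_n = λ_i S_{n-1;i}` and `S_{n-1} = S_{n-1;i} + λ_i S_{n-2;i}`, so along the `(i,i)` direction
`F = S_{n-2;i} / S_{n-1;i} + (1 - ε / S_{n-1;i}) / λ_i`, whose derivative is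
`(ε - S_{n-1;i}) / (λ_i S_n)`. Since `S_{n-1;i} ≥ ∏_{j ≠ i} λ_j ≥ δ^(n-1)`, the choice
`ε₀ = δ^(n-1)` makes `F` positive and the derivative negative.
-/

/-- The `k`-th elementary symmetric polynomial of `λ_1, …, λ_n`, with the convention that
`S_k = 0` for `k < 0` and `S_0 = 1`. -/
noncomputable def esymZ (n : ℕ) (k : ℤ) (lam : Fin n → ℝ) : ℝ :=
  if 0 ≤ k then ∑ t ∈ Finset.powersetCard k.toNat Finset.univ, ∏ i ∈ t, lam i else 0

/-- `S_k(A)` for an `n × n` matrix `A`: the `k`-th elementary symmetric function of the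
eigenvalues of `A`, i.e. the coefficient of `(-x)^(n-k)` in `det (A - x I)`. -/
noncomputable def SmatR (n : ℕ) (k : ℤ) (A : Matrix (Fin n) (Fin n) ℝ) : ℝ :=
  if 0 ≤ k ∧ k ≤ (n : ℤ) then (-1 : ℝ) ^ k.toNat * (Matrix.charpoly A).coeff (n - k.toNat)
  else 0

/-- `∂_{ij} G (A)`: the partial derivative of a function `G` of a matrix with respect to the
`(i,j)` entry, at the matrix `A`. -/
noncomputable def pd (n : ℕ) (G : Matrix (Fin n) (Fin n) ℝ → ℝ) (i j : Fin n)
    (A : Matrix (Fin n) (Fin n) ℝ) : ℝ :=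
  deriv (fun t : ℝ => G (A + t • Matrix.single i j 1)) 0

/-- The operator `F(A) = S_1(A⁻¹) - ε S_n(A⁻¹) = S_{n-1}(A)/S_n(A) - ε S_0(A)/S_n(A)`. -/
noncomputable def Fe (n : ℕ) (ε : ℝ) (A : Matrix (Fin n) (Fin n) ℝ) : ℝ :=
  SmatR n ((n : ℤ) - 1) A / SmatR n (n : ℤ) A - ε * (SmatR n 0 A / SmatR n (n : ℤ) A)

open Polynomial Finset Function

namespace Multiset

variable {R : Type*} [CommSemiring R]

theorem esymm_cons_succ (a : R) (s : Multiset R) (k : ℕ) :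
    (a ::ₘ s).esymm (k + 1) = s.esymm (k + 1) + a * s.esymm k := by
  simp [esymm, powersetCard_cons, map_map, sum_map_mul_left]

theorem esymm_zero_cons (s : Multiset R) (k : ℕ) : (0 ::ₘ s).esymm k = s.esymm k := by
  cases k with
  | zero => simp [esymm]
  | succ k => simp [esymm_cons_succ]

end Multiset

theorem Finset.univ_val_map_update {ι R : Type*} [Fintype ι] [DecidableEq ι] (f : ι → R) (i : ι)
    (x : R) : univ.val.map (update f i x) = x ::ₘ (univ.erase i).val.map f := by
  conv_lhs => rw [← insert_erase (mem_univ i)]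
  rw [insert_val_of_notMem (notMem_erase i _), Multiset.map_cons, update_self]
  exact congrArg _ (Multiset.map_congr rfl fun j hj => update_of_ne (ne_of_mem_erase hj) _ _)

theorem Matrix.diagonal_add_smul_single_self {ι R : Type*} [DecidableEq ι] [Semiring R]
    (d : ι → R) (i : ι) (t : R) :
    diagonal d + t • single i i 1 = diagonal (update d i (d i + t)) := by
  rw [smul_single, smul_eq_mul, mul_one, ← diagonal_single, diagonal_add]
  congr 1
  ext j
  by_cases hj : j = i
  · subst hj; simp
  · simp [hj]

theorem update_zero_nonneg {ι : Type*} [DecidableEq ι] {f : ι → ℝ} (hf : ∀ j, 0 ≤ f j) (i : ι)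
    (j : ι) : 0 ≤ update f i 0 j := by
  rw [update_apply]
  split_ifs
  exacts [le_rfl, hf j]

section esymZ

variable {n : ℕ}

theorem esymZ_natCast (k : ℕ) (lam : Fin n → ℝ) :
    esymZ n k lam = (univ.val.map lam).esymm k := by
  rw [esymZ, if_pos (Int.natCast_nonneg _), Int.toNat_natCast, Finset.esymm_map_val]

theorem esymZ_of_neg {k : ℤ} (hk : k < 0) (lam : Fin n → ℝ) : esymZ n k lam = 0 :=
  if_neg (not_le.mpr hk)

theorem esymZ_zero (lam : Fin n → ℝ) : esymZ n 0 lam = 1 := by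
  simp [esymZ]

theorem esymZ_nonneg (k : ℤ) {lam : Fin n → ℝ} (h : ∀ i, 0 ≤ lam i) : 0 ≤ esymZ n k lam := by
  unfold esymZ
  split
  · exact sum_nonneg fun t _ => prod_nonneg fun i _ => h i
  · exact le_rfl

theorem prod_le_esymZ {lam : Fin n → ℝ} (h : ∀ i, 0 ≤ lam i) (t : Finset (Fin n)) :
    ∏ i ∈ t, lam i ≤ esymZ n #t lam := by
  rw [esymZ, if_pos (Int.natCast_nonneg _), Int.toNat_natCast]
  exact single_le_sum (f := fun s => ∏ i ∈ s, lam i) (fun s _ => prod_nonneg fun i _ => h i)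
    (mem_powersetCard.mpr ⟨subset_univ t, rfl⟩)

theorem esymZ_self (lam : Fin n → ℝ) : esymZ n n lam = ∏ i, lam i := by
  have h := powersetCard_self (univ : Finset (Fin n))
  rw [card_univ, Fintype.card_fin] at h
  rw [esymZ, if_pos (Int.natCast_nonneg _), Int.toNat_natCast, h, sum_singleton]

theorem esymZ_update (k : ℤ) (lam : Fin n → ℝ) (i : Fin n) (x : ℝ) :
    esymZ n k (update lam i x) =
      esymZ n k (update lam i 0) + x * esymZ n (k - 1) (update lam i 0) := by
  rcases lt_or_ge k 0 with hk | hk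
  · simp [esymZ_of_neg hk, esymZ_of_neg (show k - 1 < 0 by omega)]
  lift k to ℕ using hk
  rcases k with _ | k
  · simp [esymZ]
  · rw [show ((k + 1 : ℕ) : ℤ) - 1 = k by push_cast; ring]
    simp only [esymZ_natCast, univ_val_map_update, Multiset.esymm_cons_succ,
      Multiset.esymm_zero_cons, zero_mul, add_zero]

theorem esymZ_self_update (lam : Fin n → ℝ) (i : Fin n) (x : ℝ) :
    esymZ n n (update lam i x) = x * esymZ n (n - 1) (update lam i 0) := by
  rw [esymZ_update, esymZ_self, prod_eq_zero (mem_univ i) (update_self i 0 lam), zero_add]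

theorem pow_le_esymZ_pred_update_zero (hn : 0 < n) {δ : ℝ} (hδ : 0 ≤ δ) {lam : Fin n → ℝ}
    (hlam : ∀ j, δ ≤ lam j) (i : Fin n) : δ ^ (n - 1) ≤ esymZ n (n - 1) (update lam i 0) := by
  have hcard : #(univ.erase i) = n - 1 := by simp
  calc δ ^ (n - 1) = ∏ _j ∈ univ.erase i, δ := by rw [prod_const, hcard]
    _ ≤ ∏ j ∈ univ.erase i, lam j := prod_le_prod (fun _ _ => hδ) fun j _ => hlam j
    _ = ∏ j ∈ univ.erase i, update lam i 0 j := (prod_update_of_notMem (notMem_erase i _) _ _).symm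
    _ ≤ esymZ n (n - 1) (update lam i 0) := by
      have h := prod_le_esymZ (update_zero_nonneg (fun j => hδ.trans (hlam j)) i) (univ.erase i)
      rwa [hcard, Nat.cast_pred hn] at h

end esymZ

theorem SmatR_diagonal {n k : ℕ} (hk : k ≤ n) (lam : Fin n → ℝ) :
    SmatR n k (Matrix.diagonal lam) = esymZ n k lam := by
  have hcard : Multiset.card (univ.val.map lam) = n := by simp
  rw [SmatR, if_pos ⟨Int.natCast_nonneg k, by exact_mod_cast hk⟩, Int.toNat_natCast,
    Matrix.charpoly_diagonal, prod_eq_multiset_prod,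
    show univ.val.map (fun i => X - C (lam i)) = (univ.val.map lam).map (fun t => X - C t) by
      rw [Multiset.map_map]; rfl,
    Multiset.prod_X_sub_C_coeff _ (by omega), hcard, Nat.sub_sub_self hk, ← mul_assoc, ← pow_add,
    Even.neg_one_pow ⟨k, rfl⟩, one_mul, esymZ_natCast]

theorem Fe_diagonal {n : ℕ} (hn : 0 < n) (ε : ℝ) (lam : Fin n → ℝ) :
    Fe n ε (Matrix.diagonal lam) = (esymZ n (n - 1) lam - ε) / esymZ n n lam := by
  have h := SmatR_diagonal (Nat.sub_le n 1) lam
  have h0 := SmatR_diagonal (Nat.zero_le n) lam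
  rw [Nat.cast_pred hn] at h
  rw [Nat.cast_zero] at h0
  rw [Fe, h, h0, SmatR_diagonal le_rfl, esymZ_zero, mul_one_div, div_sub_div_same]

theorem pd_Fe_diagonal {n : ℕ} (hn : 0 < n) (ε : ℝ) (lam : Fin n → ℝ) (i : Fin n)
    (h : esymZ n n lam ≠ 0) :
    pd n (Fe n ε) i i (Matrix.diagonal lam) =
      (-esymZ n (n - 1) (update lam i 0) + ε) / (lam i * esymZ n n lam) := by
  set P := esymZ n (n - 1) (update lam i 0)
  set Q := esymZ n (n - 1 - 1) (update lam i 0)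
  have hself : esymZ n n lam = lam i * P := by
    simpa using esymZ_self_update lam i (lam i)
  obtain ⟨hlam, hP⟩ : lam i ≠ 0 ∧ P ≠ 0 := mul_ne_zero_iff.mp (hself ▸ h)
  have hline : (fun t : ℝ => Fe n ε (Matrix.diagonal lam + t • Matrix.single i i 1)) =
      fun t => (P + (lam i + t) * Q - ε) / ((lam i + t) * P) := by
    funext t
    rw [Matrix.diagonal_add_smul_single_self, Fe_diagonal hn, esymZ_self_update, esymZ_update]
  have hx : HasDerivAt (fun t : ℝ => lam i + t) 1 0 := (hasDerivAt_id 0).const_add _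
  have hderiv : HasDerivAt (fun t : ℝ => (P + (lam i + t) * Q - ε) / ((lam i + t) * P)) _ 0 :=
    (((hx.mul_const Q).const_add P).sub_const ε).div (hx.mul_const P)
      (by simpa using mul_ne_zero hlam hP)
  rw [pd, hline, hderiv.deriv, hself]
  simp only [add_zero, one_mul]
  field_simp
  ring

/-- Lemma 2.4 (1): given `δ > 0`, for all sufficiently small `ε > 0`, the operator
`F(A) = S_1(A⁻¹) - ε S_n(A⁻¹)` satisfies `F(A) > 0` and
`∂_{ii} F(A) = (-S_{n-1;i}(A) + ε)/(λ_i S_n(A)) < 0` at every diagonal matrix `A` with all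
eigenvalues `λ_i > δ`. -/
theorem statement4 (n : ℕ) (hn : 0 < n) (δ : ℝ) (hδ : 0 < δ) :
    ∃ ε₀ > 0, ∀ ε : ℝ, 0 < ε → ε < ε₀ →
      ∀ lam : Fin n → ℝ, (∀ i, δ < lam i) →
        0 < Fe n ε (Matrix.diagonal lam) ∧
        ∀ i : Fin n,
          pd n (Fe n ε) i i (Matrix.diagonal lam) =
            (-(esymZ n ((n : ℤ) - 1) (Function.update lam i 0)) + ε) /
              (lam i * esymZ n (n : ℤ) lam) ∧
          pd n (Fe n ε) i i (Matrix.diagonal lam) < 0 := by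
  refine ⟨δ ^ (n - 1), pow_pos hδ _, fun ε _ hεδ lam hlam => ?_⟩
  have hpos (j : Fin n) : 0 < lam j := hδ.trans (hlam j)
  have hε_lt (i : Fin n) : ε < esymZ n (n - 1) (update lam i 0) :=
    hεδ.trans_le (pow_le_esymZ_pred_update_zero hn hδ.le (fun j => (hlam j).le) i)
  have hSn : 0 < esymZ n n lam := by
    rw [esymZ_self]
    exact prod_pos fun j _ => hpos j
  refine ⟨?_, fun i => ⟨pd_Fe_diagonal hn ε lam i hSn.ne', ?_⟩⟩
  · let i₀ : Fin n := ⟨0, hn⟩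
    have hexpand := esymZ_update ((n : ℤ) - 1) lam i₀ (lam i₀)
    rw [update_eq_self] at hexpand
    have hQ := mul_nonneg (hpos i₀).le (esymZ_nonneg ((n : ℤ) - 1 - 1)
      (update_zero_nonneg (fun j => (hpos j).le) i₀))
    rw [Fe_diagonal hn, hexpand]
    exact div_pos (by linarith [hε_lt i₀]) hSn
  · rw [pd_Fe_diagonal hn ε lam i hSn.ne']
    exact div_neg_of_neg_of_pos (by linarith [hε_lt i]) (mul_pos (hpos i) hSn)
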